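/- Let x, x' ∈ Σ_q^n with supp(x−x') = {i_1 < i_2 < ⋯ < i_d}, d ≥ 2; let 0 = j_0 < j_1 < ⋯ < j_m = n be the right endpoints of the runs of x and 0 = j'_0 < j'_1 < ⋯ < j'_{m'} = n the right endpoints of the runs of x'. For any i ∈ [m] and i' ∈ [m'] with supp(x−x') ∩ [min(j_i, j'_{i'}), max(j_i, j'_{i'})] = ∅, one has d_H(x_{[n]∖{j_i}}, x'_{[n]∖{j'_{i'}}}) = d if and only if j_i = j'_{i'}. Consequently, the number of pairs (j_i, j'_{i'}) satisfying this emptiness condition together with d_H(x_{[n]∖{j_i}}, x'_{[n]∖{j'_{i'}}}) = d is at most n − d. -/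

import Mathlib

/-- Sequences of length `n` are modelled as functions `ℕ → Fin q` whose relevant
positions are `1, …, n` (1-based, as in the paper). `delN x j` deletes position `j`. -/
def delN {q : ℕ} (x : ℕ → Fin q) (j : ℕ) : ℕ → Fin q :=
  fun i => if i < j then x i else x (i + 1)

/-- Hamming distance between two length-`n` sequences (positions `1, …, n`). -/
def hdist {q : ℕ} (n : ℕ) (u v : ℕ → Fin q) : ℕ :=
  ((Finset.Icc 1 n).filter fun i => u i ≠ v i).card

/-- `j 0 = 0 < j 1 < ⋯ < j m = n` are the right endpoints of the runs of `x`. -/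
def IsRunDecomp {q : ℕ} (n m : ℕ) (x : ℕ → Fin q) (j : ℕ → ℕ) : Prop :=
  j 0 = 0 ∧ j m = n ∧ (∀ i, i < m → j i < j (i + 1)) ∧
  (∀ i, 1 ≤ i → i ≤ m → ∀ a b, j (i - 1) + 1 ≤ a → a ≤ j i →
      j (i - 1) + 1 ≤ b → b ≤ j i → x a = x b) ∧
  (∀ i, 1 ≤ i → i < m → x (j i) ≠ x (j i + 1))

/-!
Deleting the same position `t` from two sequences that agree at `t` just closes the gap on both
sides, so the Hamming distance is unchanged. If instead `t < t'` are deleted and the sequences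
agree on `[t, t']`, every difference outside `[t, t']` survives (those right of `t'` moved one
place left), and a new one appears at position `t`, where `x_{t+1}` faces `x'_t = x_t`: these differ
because `t` ends a run of `x`. So among pairs of run ends not separated by a difference, the
distance `d` is attained exactly when the two run ends coincide. Such common run ends are
distinct positions outside the support, and there are at most `n - d` of those.
-/

open Finset

section Deletion

variable {q : ℕ}

lemma delN_of_lt (x : ℕ → Fin q) {t i : ℕ} (h : i < t) : delN x t i = x i := if_pos h

lemma delN_of_le (x : ℕ → Fin q) {t i : ℕ} (h : t ≤ i) : delN x t i = x (i + 1) :=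
  if_neg (not_lt.2 h)

lemma hdist_comm (n : ℕ) (u v : ℕ → Fin q) : hdist n u v = hdist n v u := by
  simp only [hdist, ne_comm]

lemma hdist_delN_self {n t : ℕ} {x x' : ℕ → Fin q} (ht : t ∈ Icc 1 n) (hxt : x t = x' t) :
    hdist (n - 1) (delN x t) (delN x' t) = hdist n x x' := by
  rw [mem_Icc] at ht
  refine card_nbij' (fun i => if i < t then i else i + 1) (fun a => if a < t then a else a - 1)
    ?_ ?_ ?_ ?_
  · intro i hi
    simp only [coe_filter, mem_Icc, Set.mem_ofPred_eq] at hi ⊢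
    split_ifs with h
    · exact ⟨by omega, by simpa only [delN_of_lt x h, delN_of_lt x' h] using hi.2⟩
    · rw [not_lt] at h
      exact ⟨by omega, by simpa only [delN_of_le x h, delN_of_le x' h] using hi.2⟩
  · intro a ha
    simp only [coe_filter, mem_Icc, Set.mem_ofPred_eq] at ha ⊢
    have hat : a ≠ t := by rintro rfl; exact ha.2 hxt
    split_ifs with h
    · exact ⟨by omega, by simpa only [delN_of_lt x h, delN_of_lt x' h] using ha.2⟩
    · have hle : t ≤ a - 1 := by omega
      rw [delN_of_le x hle, delN_of_le x' hle, Nat.sub_add_cancel (by omega)]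
      exact ⟨by omega, ha.2⟩
  · intro i _
    dsimp only
    split_ifs <;> omega
  · intro a ha
    simp only [coe_filter, mem_Icc, Set.mem_ofPred_eq] at ha
    have hat : a ≠ t := by rintro rfl; exact ha.2 hxt
    dsimp only
    split_ifs <;> omega

lemma hdist_lt_hdist_delN {n t t' : ℕ} {x x' : ℕ → Fin q} (ht : 1 ≤ t) (htt' : t < t')
    (ht'n : t' ≤ n) (hbreak : x t ≠ x (t + 1)) (hagree : ∀ a ∈ Icc t t', x a = x' a) :
    hdist n x x' < hdist (n - 1) (delN x t) (delN x' t') := by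
  set S := (Icc 1 n).filter fun k => x k ≠ x' k
  have hout : ∀ a ∈ S, a < t ∨ t' < a := by
    intro a ha
    by_contra! hin
    exact (mem_filter.1 ha).2 (hagree a (mem_Icc.2 hin))
  have htS : t ∉ S := fun h => by have := hout t h; omega
  have hout' : ∀ a ∈ insert t S, a ≤ t ∨ t' < a := by
    intro a ha
    rcases mem_insert.1 ha with rfl | ha
    · exact Or.inl le_rfl
    · exact (hout a ha).imp le_of_lt id
  calc #S < #(insert t S) := card_lt_card (ssubset_insert htS)
    _ ≤ hdist (n - 1) (delN x t) (delN x' t') := by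
      refine card_le_card_of_injOn (fun a => if a ≤ t then a else a - 1) (fun a ha => ?_)
        (fun a ha b hb hab => ?_)
      · simp only [mem_coe, mem_filter, mem_Icc]
        rcases mem_insert.1 ha with rfl | ha
        · rw [if_pos le_rfl, delN_of_le x le_rfl, delN_of_lt x' htt',
            ← hagree a (left_mem_Icc.2 htt'.le)]
          exact ⟨by omega, Ne.symm hbreak⟩
        have ⟨ha1, han⟩ := mem_Icc.1 (mem_filter.1 ha).1
        rcases hout a ha with hlt | hgt
        · rw [if_pos hlt.le, delN_of_lt x hlt, delN_of_lt x' (hlt.trans htt')]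
          exact ⟨by omega, (mem_filter.1 ha).2⟩
        · have hle : t ≤ a - 1 := by omega
          have hle' : t' ≤ a - 1 := by omega
          rw [if_neg (by omega), delN_of_le x hle, delN_of_le x' hle', Nat.sub_add_cancel ha1]
          exact ⟨by omega, (mem_filter.1 ha).2⟩
      · have := hout' a ha
        have := hout' b hb
        dsimp only at hab
        split_ifs at hab <;> omega

theorem hdist_delN_eq_iff {n t t' : ℕ} {x x' : ℕ → Fin q} (ht : t ∈ Icc 1 n) (ht' : t' ∈ Icc 1 n)
    (hbreak : t < n → x t ≠ x (t + 1)) (hbreak' : t' < n → x' t' ≠ x' (t' + 1))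
    (hagree : ∀ a ∈ Icc (min t t') (max t t'), x a = x' a) :
    hdist (n - 1) (delN x t) (delN x' t') = hdist n x x' ↔ t = t' := by
  rw [mem_Icc] at ht ht'
  refine ⟨fun h => ?_, fun h => ?_⟩
  · by_contra hne
    rcases lt_or_gt_of_ne hne with hlt | hlt
    · have := hdist_lt_hdist_delN ht.1 hlt ht'.2 (hbreak (by omega))
        (fun a ha => hagree a (by simp at ha ⊢; omega))
      omega
    · have := hdist_lt_hdist_delN ht'.1 hlt ht.2 (hbreak' (by omega))
        (fun a ha => (hagree a (by simp at ha ⊢; omega)).symm)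
      rw [hdist_comm n, hdist_comm (n - 1)] at this
      omega
  · subst h
    exact hdist_delN_self (mem_Icc.2 ht) (hagree t (by simp))

end Deletion

namespace IsRunDecomp

variable {q n m : ℕ} {x : ℕ → Fin q} {j : ℕ → ℕ}

lemma strictMonoOn (h : IsRunDecomp n m x j) : StrictMonoOn j (Set.Iic m) :=
  strictMonoOn_Iic_of_lt_succ h.2.2.1

lemma apply_mem_Icc (h : IsRunDecomp n m x j) {i : ℕ} (hi : i ∈ Icc 1 m) :
    j i ∈ Icc 1 n := by
  rw [mem_Icc] at hi ⊢
  have hpos : j 0 < j i := h.strictMonoOn (Nat.zero_le m) hi.2 (by omega)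
  have hle : j i ≤ j m := h.strictMonoOn.monotoneOn hi.2 (le_refl m) hi.2
  obtain ⟨hj0, hjm, -, -, -⟩ := h
  omega

lemma ne_succ (h : IsRunDecomp n m x j) {i : ℕ} (hi : i ∈ Icc 1 m) (hn : j i < n) :
    x (j i) ≠ x (j i + 1) := by
  obtain ⟨-, hjm, -, -, hbreak⟩ := h
  rw [mem_Icc] at hi
  refine hbreak i hi.1 (lt_of_le_of_ne hi.2 ?_)
  rintro rfl
  exact hn.ne hjm

theorem hdist_delN_eq_iff {m' : ℕ} {x' : ℕ → Fin q} {j' : ℕ → ℕ} (hx : IsRunDecomp n m x j)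
    (hx' : IsRunDecomp n m' x' j') {i i' : ℕ} (hi : i ∈ Icc 1 m) (hi' : i' ∈ Icc 1 m')
    (hempty : (Icc 1 n).filter (fun k => x k ≠ x' k) ∩
      Icc (min (j i) (j' i')) (max (j i) (j' i')) = ∅) :
    hdist (n - 1) (delN x (j i)) (delN x' (j' i')) = hdist n x x' ↔ j i = j' i' := by
  have ht := hx.apply_mem_Icc hi
  have ht' := hx'.apply_mem_Icc hi'
  refine _root_.hdist_delN_eq_iff ht ht' (hx.ne_succ hi) (hx'.ne_succ hi') fun a ha => ?_
  by_contra hne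
  refine disjoint_right.1 (disjoint_iff_inter_eq_empty.2 hempty) ha (mem_filter.2 ⟨?_, hne⟩)
  simp only [mem_Icc] at ht ht' ha ⊢
  omega

end IsRunDecomp

lemma card_filter_le_of_diag {m m' : ℕ} {j j' : ℕ → ℕ} (hj : StrictMonoOn j (Set.Iic m))
    (hj' : StrictMonoOn j' (Set.Iic m')) {P : ℕ × ℕ → Prop} [DecidablePred P] {T : Finset ℕ}
    (hP : ∀ p ∈ Icc 1 m ×ˢ Icc 1 m', P p → j p.1 = j' p.2 ∧ j p.1 ∈ T) :
    #((Icc 1 m ×ˢ Icc 1 m').filter P) ≤ #T := by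
  refine card_le_card_of_injOn (fun p => j p.1)
    (fun p hp => (hP p (mem_filter.1 hp).1 (mem_filter.1 hp).2).2) ?_
  rintro p hp r hr (hpr : j p.1 = j r.1)
  obtain ⟨hpmem, hpP⟩ := mem_filter.1 hp
  obtain ⟨hrmem, hrP⟩ := mem_filter.1 hr
  have hpr' : j' p.2 = j' r.2 := by rw [← (hP p hpmem hpP).1, ← (hP r hrmem hrP).1, hpr]
  simp only [mem_product, mem_Icc] at hpmem hrmem
  exact Prod.ext (hj.injOn hpmem.1.2 hrmem.1.2 hpr) (hj'.injOn hpmem.2.2 hrmem.2.2 hpr')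

theorem stmt11_general (q n m m' d : ℕ)
    (x x' : ℕ → Fin q)
    (hsupp : ((Finset.Icc 1 n).filter fun k => x k ≠ x' k).card = d)
    (j j' : ℕ → ℕ)
    (hx : IsRunDecomp n m x j) (hx' : IsRunDecomp n m' x' j') :
    (∀ i i', 1 ≤ i → i ≤ m → 1 ≤ i' → i' ≤ m' →
      ((Finset.Icc 1 n).filter fun k => x k ≠ x' k) ∩
          Finset.Icc (min (j i) (j' i')) (max (j i) (j' i')) = ∅ →
      (hdist (n - 1) (delN x (j i)) (delN x' (j' i')) = d ↔ j i = j' i')) ∧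
    ((Finset.Icc 1 m ×ˢ Finset.Icc 1 m').filter fun p =>
        (((Finset.Icc 1 n).filter fun k => x k ≠ x' k) ∩
          Finset.Icc (min (j p.1) (j' p.2)) (max (j p.1) (j' p.2)) = ∅) ∧
        hdist (n - 1) (delN x (j p.1)) (delN x' (j' p.2)) = d).card ≤ n - d := by
  refine ⟨fun i i' hi him hi' hi'm hempty =>
    hsupp ▸ hx.hdist_delN_eq_iff hx' (mem_Icc.2 ⟨hi, him⟩) (mem_Icc.2 ⟨hi', hi'm⟩) hempty, ?_⟩
  calc _ ≤ #(Icc 1 n \ (Icc 1 n).filter fun k => x k ≠ x' k) := by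
        refine card_filter_le_of_diag hx.strictMonoOn hx'.strictMonoOn
          fun p hp ⟨hempty, hdist_eq⟩ => ?_
        obtain ⟨hp1, hp2⟩ := mem_product.1 hp
        have hj : j p.1 = j' p.2 :=
          (hx.hdist_delN_eq_iff hx' hp1 hp2 hempty).1 (hdist_eq.trans hsupp.symm)
        refine ⟨hj, mem_sdiff.2 ⟨hx.apply_mem_Icc hp1, fun hmem => ?_⟩⟩
        refine disjoint_left.1 (disjoint_iff_inter_eq_empty.2 hempty) hmem ?_
        simp [← hj]
    _ = n - d := by
      rw [card_sdiff_of_subset (filter_subset _ _), hsupp, Nat.card_Icc, Nat.add_sub_cancel]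

/-- For run endpoints `j_i` of `x` and `j'_{i'}` of `x'` with
`supp(x − x') ∩ [min(j_i, j'_{i'}), max(j_i, j'_{i'})] = ∅`, the deleted sequences are
at Hamming distance exactly `d = |supp(x − x')|` iff `j_i = j'_{i'}`; consequently at
most `n − d` pairs `(j_i, j'_{i'})` satisfy the emptiness condition together with
`d_H(x_{[n]∖{j_i}}, x'_{[n]∖{j'_{i'}}}) = d`. -/
theorem stmt11 (q n m m' d : ℕ) (hq : 2 ≤ q) (hd : 2 ≤ d)
    (x x' : ℕ → Fin q)
    (hsupp : ((Finset.Icc 1 n).filter fun k => x k ≠ x' k).card = d)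
    (j j' : ℕ → ℕ)
    (hx : IsRunDecomp n m x j) (hx' : IsRunDecomp n m' x' j') :
    (∀ i i', 1 ≤ i → i ≤ m → 1 ≤ i' → i' ≤ m' →
      ((Finset.Icc 1 n).filter fun k => x k ≠ x' k) ∩
          Finset.Icc (min (j i) (j' i')) (max (j i) (j' i')) = ∅ →
      (hdist (n - 1) (delN x (j i)) (delN x' (j' i')) = d ↔ j i = j' i')) ∧
    ((Finset.Icc 1 m ×ˢ Finset.Icc 1 m').filter fun p =>
        (((Finset.Icc 1 n).filter fun k => x k ≠ x' k) ∩
          Finset.Icc (min (j p.1) (j' p.2)) (max (j p.1) (j' p.2)) = ∅) ∧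
        hdist (n - 1) (delN x (j p.1)) (delN x' (j' p.2)) = d).card ≤ n - d :=
  stmt11_general q n m m' d x x' hsupp j j' hx hx'
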